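/- arXiv:2206.08775 — 3 statements merged into one kernel-verified Lean document; each statement's English description precedes it below -/
import Mathlib

section
/- Let X be a finite nonempty set, F(X) the free group on X with S = X ∪ X⁻¹, and let A be a finitely generated group with finite symmetric generating set S_A. An element g = (f,x) of A ≀ F(X) satisfies ‖gs‖_{S_std} ≤ ‖g‖_{S_std} for every s ∈ S_std = S_A ∪ S (i.e., g is a dead end) if and only if the following three conditions hold: (1) f(x) is a dead end of (A,S_A), i.e. ‖f(x)·a‖_{S_A} ≤ ‖f(x)‖_{S_A} for all a ∈ S_A; (2) for every s ∈ S, the edge joining x and xs belongs to [e_{F(X)}, supp(f)]; and (3) x = e_{F(X)}. -/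
open scoped Classical

/-- The word length of `g` with respect to a generating set `S`: the least `n` such that
`g` is a product of `n` elements of `S`. -/
noncomputable def wordLength {G : Type*} [Group G] (S : Set G) (g : G) : ℕ :=
  sInf {n | ∃ l : List G, (∀ x ∈ l, x ∈ S) ∧ l.length = n ∧ l.prod = g}

/-- `g` has depth at least `n` with respect to `S`: multiplying `g` by between `1` and `n`
generators of `S` never increases word length. -/
def HasDepthAtLeast {G : Type*} [Group G] (S : Set G) (g : G) (n : ℕ) : Prop :=
  ∀ l : List G, (∀ x ∈ l, x ∈ S) → 1 ≤ l.length → l.length ≤ n →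
    wordLength S (g * l.prod) ≤ wordLength S g

/-- `(G, S)` has unbounded depth: for every `n` there is an element of depth at least `n`. -/
def UnboundedDepth {G : Type*} [Group G] (S : Set G) : Prop :=
  ∀ n : ℕ, ∃ g : G, HasDepthAtLeast S g n

/-- `S` is a finite symmetric generating set of `G`. -/
structure IsSymmGen {G : Type*} [Group G] (S : Set G) : Prop where
  finite : S.Finite
  symm : ∀ s ∈ S, s⁻¹ ∈ S
  closure_eq_top : Subgroup.closure S = ⊤

/-- The group of finitely supported functions `B → A`, as a subgroup of the direct
product `B → A`. -/
def FinSuppSubgroup (A B : Type*) [Group A] : Subgroup (B → A) where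
  carrier := {f | (Function.mulSupport f).Finite}
  one_mem' := by
    simp [Function.mulSupport_one]
  mul_mem' := by
    intro f g hf hg
    exact Set.Finite.subset (hf.union hg) (Function.mulSupport_mul f g)
  inv_mem' := by
    intro f hf
    simpa [Function.mulSupport_inv] using hf

/-- Left translation by `b ∈ B` on finitely supported functions: `(b · f) x = f (b⁻¹ x)`. -/
def lampTranslate (A B : Type*) [Group A] [Group B] (b : B) :
    FinSuppSubgroup A B ≃* FinSuppSubgroup A B where
  toFun f := ⟨fun x => (f : B → A) (b⁻¹ * x), by
    have h : Function.mulSupport (fun x => (f : B → A) (b⁻¹ * x)) ⊆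
        (fun x : B => b⁻¹ * x) ⁻¹' Function.mulSupport (f : B → A) := fun x hx => hx
    exact Set.Finite.subset
      (Set.Finite.preimage (Set.injOn_of_injective (mul_right_injective b⁻¹)) f.2) h⟩
  invFun f := ⟨fun x => (f : B → A) (b * x), by
    have h : Function.mulSupport (fun x => (f : B → A) (b * x)) ⊆
        (fun x : B => b * x) ⁻¹' Function.mulSupport (f : B → A) := fun x hx => hx
    exact Set.Finite.subset
      (Set.Finite.preimage (Set.injOn_of_injective (mul_right_injective b)) f.2) h⟩
  left_inv f := Subtype.ext (funext fun x => by simp)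
  right_inv f := Subtype.ext (funext fun x => by simp)
  map_mul' f g := rfl

/-- The action of `B` on finitely supported functions `B → A` by left translation. -/
def lampAction (A B : Type*) [Group A] [Group B] :
    B →* MulAut (FinSuppSubgroup A B) where
  toFun := lampTranslate A B
  map_one' := by
    apply MulEquiv.ext
    intro f
    apply Subtype.ext
    funext x
    show (f : B → A) ((1 : B)⁻¹ * x) = (f : B → A) x
    simp
  map_mul' b c := by
    apply MulEquiv.ext
    intro f
    apply Subtype.ext
    funext x
    show (f : B → A) ((b * c)⁻¹ * x) = (f : B → A) (c⁻¹ * (b⁻¹ * x))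
    rw [mul_inv_rev, mul_assoc]

/-- The restricted wreath product `A ≀ B`, i.e. the semidirect product
`(⨁_B A) ⋊ B` where `B` acts by left translation. -/
abbrev Wreath (A B : Type*) [Group A] [Group B] :=
  FinSuppSubgroup A B ⋊[lampAction A B] B

/-- `δ_a`: the finitely supported function sending `1 ∈ B` to `a` and everything else
to `1 ∈ A`. -/
noncomputable def lampSingle (A B : Type*) [Group A] [Group B] (a : A) :
    FinSuppSubgroup A B :=
  ⟨fun x => if x = (1 : B) then a else 1, by
    apply Set.Finite.subset (Set.finite_singleton (1 : B))
    intro x hx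
    simp only [Set.mem_singleton_iff]
    by_contra h
    exact hx (if_neg h)⟩

/-- The standard generating set `S_A ∪ S_B` of the wreath product `A ≀ B`, where
`a ∈ S_A` is identified with `(δ_a, 1)` and `b ∈ S_B` with `(𝟙, b)`. -/
noncomputable def stdGen {A B : Type*} [Group A] [Group B] (SA : Set A) (SB : Set B) :
    Set (Wreath A B) :=
  ((fun a => SemidirectProduct.inl (lampSingle A B a)) '' SA) ∪
    ((fun b => SemidirectProduct.inr b) '' SB)

/-- The symmetric generating set `X ∪ X⁻¹` of the free group `F(X)`. -/
def freeGenSet (X : Type*) : Set (FreeGroup X) :=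
  {g | ∃ x : X, g = FreeGroup.of x ∨ g = (FreeGroup.of x)⁻¹}

/-- `[u, v]`: the set of edges of the unique geodesic from `u` to `v` in the Cayley
tree of `F(X)` with respect to `X ∪ X⁻¹`; its vertices are `u` multiplied by the
prefixes of the reduced word of `u⁻¹v`. -/
def geodEdges {X : Type*} [DecidableEq X] (u v : FreeGroup X) :
    Set (Sym2 (FreeGroup X)) :=
  {e | ∃ i < (FreeGroup.toWord (u⁻¹ * v)).length,
    e = s(u * FreeGroup.mk ((FreeGroup.toWord (u⁻¹ * v)).take i),
          u * FreeGroup.mk ((FreeGroup.toWord (u⁻¹ * v)).take (i + 1)))}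

/-- `[u, H]`: the union of the geodesic edge sets `[u, h]` over `h ∈ H`. -/
def geodUnion {X : Type*} [DecidableEq X] (u : FreeGroup X) (H : Set (FreeGroup X)) :
    Set (Sym2 (FreeGroup X)) :=
  ⋃ h ∈ H, geodEdges u h

/-!
Write `T = [1, supp f]` for the subtree spanned by the lamps of `g = (f, x)`. The word length of
`g` is the tour length `∑ ‖f y‖ + 2 |T \ [1, x]| + |x|`: this vanishes at `1`, grows by at most
one under each generator, and at every `g ≠ 1` some generator decreases it (fix the lamp at `x`,
else step towards a lit lamp beyond `x`, else step back towards `1`).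

Moving the cursor from `x` to a child `y` changes the tour length by `-1` if `{x, y} ∈ T` and
by `+1` otherwise. At a dead end with `x ≠ 1`, take a child `y` of `x`: if `{x, y} ∉ T` moving
to `y` is longer; otherwise `T` also contains the edge from `x` to its parent, and moving back is
longer. Hence `x = 1`, where every cursor move goes to a child.
-/

section WordLength

variable {G : Type*} [Group G] {S : Set G}

theorem wordLength_le_length {l : List G} (hl : ∀ s ∈ l, s ∈ S) :
    wordLength S l.prod ≤ l.length :=
  Nat.sInf_le ⟨l, hl, rfl, rfl⟩

@[simp]
theorem wordLength_one : wordLength S (1 : G) = 0 :=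
  Nat.le_zero.1 (wordLength_le_length (l := []) (by simp))

theorem exists_length_eq_wordLength {g : G}
    (hg : ∃ l : List G, (∀ s ∈ l, s ∈ S) ∧ l.prod = g) :
    ∃ l : List G, (∀ s ∈ l, s ∈ S) ∧ l.length = wordLength S g ∧ l.prod = g := by
  obtain ⟨l, hl, rfl⟩ := hg
  exact Nat.sInf_mem
    (s := {n | ∃ m : List G, (∀ s ∈ m, s ∈ S) ∧ m.length = n ∧ m.prod = l.prod})
    ⟨_, l, hl, rfl, rfl⟩

theorem exists_list_prod_eq (hS : ∀ s ∈ S, s⁻¹ ∈ S) (hgen : Subgroup.closure S = ⊤) (g : G) :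
    ∃ l : List G, (∀ s ∈ l, s ∈ S) ∧ l.prod = g := by
  have hg : g ∈ (Subgroup.closure S).toSubmonoid := by simp [hgen]
  rw [Subgroup.closure_toSubmonoid] at hg
  obtain ⟨l, hl, rfl⟩ := Submonoid.exists_list_of_mem_closure hg
  refine ⟨l, fun s hs => ?_, rfl⟩
  rcases hl s hs with h | h
  exacts [h, inv_inv s ▸ hS _ h]

theorem wordLength_mul_le_succ (hS : ∀ s ∈ S, s⁻¹ ∈ S) (hgen : Subgroup.closure S = ⊤) (g : G)
    {s : G} (hs : s ∈ S) : wordLength S (g * s) ≤ wordLength S g + 1 := by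
  obtain ⟨l, hl, hlen, rfl⟩ := exists_length_eq_wordLength (exists_list_prod_eq hS hgen g)
  have := wordLength_le_length (S := S) (l := l ++ [s])
    (by simpa [or_imp, forall_and] using ⟨hl, hs⟩)
  simpa [← hlen] using this

theorem exists_wordLength_mul_lt (hS : ∀ s ∈ S, s⁻¹ ∈ S) (hgen : Subgroup.closure S = ⊤)
    {g : G} (hg : g ≠ 1) : ∃ s ∈ S, wordLength S (g * s) < wordLength S g := by
  obtain ⟨l, hl, hlen, rfl⟩ := exists_length_eq_wordLength (exists_list_prod_eq hS hgen g)
  obtain h | ⟨l, s, rfl⟩ := List.eq_nil_or_concat' l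
  · simp [h] at hg
  refine ⟨s⁻¹, hS s (hl s (by simp)), ?_⟩
  have := wordLength_le_length (S := S) (l := l) fun t ht => hl t (by simp [ht])
  simp only [List.prod_append, List.prod_singleton, mul_inv_cancel_right, List.length_append,
    List.length_singleton] at hlen ⊢
  omega

theorem wordLength_eq_of_descent (hS : ∀ s ∈ S, s⁻¹ ∈ S) (φ : G → ℕ) (h_one : φ 1 = 0)
    (h_mul : ∀ g, ∀ s ∈ S, φ (g * s) ≤ φ g + 1)
    (h_desc : ∀ g ≠ 1, ∃ s ∈ S, φ (g * s) < φ g) (g : G) : wordLength S g = φ g := by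
  have h_word : ∀ n, ∀ g, φ g = n →
      ∃ l : List G, (∀ s ∈ l, s ∈ S) ∧ l.length ≤ n ∧ l.prod = g := by
    intro n
    induction n using Nat.strong_induction_on with
    | _ n ih =>
      intro g hg
      by_cases h1 : g = 1
      · exact ⟨[], by simp, by simp, by simp [h1]⟩
      obtain ⟨s, hs, hlt⟩ := h_desc g h1
      obtain ⟨l, hl, hlen, hprod⟩ := ih _ (hg ▸ hlt) _ rfl
      refine ⟨l ++ [s⁻¹], ?_, by simp only [List.length_append, List.length_singleton]; omega,
        by simp [hprod]⟩
      simpa [or_imp, forall_and] using ⟨hl, hS s hs⟩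
  have h_le : ∀ (l : List G) (g : G), (∀ s ∈ l, s ∈ S) → φ (g * l.prod) ≤ φ g + l.length := by
    intro l
    induction l with
    | nil => simp
    | cons s l ih =>
      intro g hl
      have := ih (g * s) (fun t ht => hl t (by simp [ht]))
      have := h_mul g s (hl s (by simp))
      simp only [List.prod_cons, List.length_cons, ← mul_assoc]
      omega
  obtain ⟨l, hl, hlen, rfl⟩ := h_word _ g rfl
  obtain ⟨m, hm, hmlen, hprod⟩ := exists_length_eq_wordLength ⟨l, hl, rfl⟩
  have h_upper := wordLength_le_length hl
  have h_lower := h_le m 1 hm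
  rw [one_mul, hprod, h_one] at h_lower
  omega

end WordLength

namespace FreeGroup

variable {X : Type*}

theorem mk_singleton_inv (ℓ : X × Bool) : (mk [ℓ])⁻¹ = mk [(ℓ.1, !ℓ.2)] := by
  simp [inv_mk, invRev]

theorem mk_singleton_mem_freeGenSet (ℓ : X × Bool) : mk [ℓ] ∈ freeGenSet X := by
  obtain ⟨a, _ | _⟩ := ℓ
  · exact ⟨a, Or.inr (by rw [of, mk_singleton_inv]; rfl)⟩
  · exact ⟨a, Or.inl rfl⟩

theorem exists_eq_mk_singleton_of_mem_freeGenSet {s : FreeGroup X} (hs : s ∈ freeGenSet X) :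
    ∃ ℓ, s = mk [ℓ] := by
  obtain ⟨a, rfl | rfl⟩ := hs
  · exact ⟨(a, true), rfl⟩
  · exact ⟨(a, false), mk_singleton_inv (a, true)⟩

theorem inv_mem_freeGenSet {s : FreeGroup X} (hs : s ∈ freeGenSet X) : s⁻¹ ∈ freeGenSet X := by
  obtain ⟨ℓ, rfl⟩ := exists_eq_mk_singleton_of_mem_freeGenSet hs
  rw [mk_singleton_inv]
  exact mk_singleton_mem_freeGenSet _

theorem isReduced_append_singleton {w : List (X × Bool)} {ℓ : X × Bool} (hw : IsReduced w)
    (h : ∀ m ∈ w.getLast?, m.1 = ℓ.1 → m.2 = ℓ.2) : IsReduced (w ++ [ℓ]) :=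
  List.isChain_append.2 ⟨hw, IsReduced.singleton, fun m hm _ hℓ => by
    obtain rfl : ℓ = _ := by simpa using hℓ
    exact h m hm⟩

variable [DecidableEq X]

theorem toWord_mk_of_prefix {w : List (X × Bool)} {x : FreeGroup X} (h : w <+: x.toWord) :
    (mk w).toWord = w := by
  rw [toWord_mk, (isReduced_toWord.infix h.isInfix).reduce_eq]

theorem eq_mul_mk_singleton {x y : FreeGroup X} {ℓ : X × Bool}
    (h : y.toWord = x.toWord ++ [ℓ]) : y = x * mk [ℓ] := by
  rw [← mk_toWord (x := y), h, ← mul_mk, mk_toWord]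

theorem mul_mk_singleton_inv_eq {x p : FreeGroup X} {ℓ : X × Bool}
    (h : x.toWord = p.toWord ++ [ℓ]) : x * (mk [ℓ])⁻¹ = p := by
  rw [eq_mul_mk_singleton h, mul_inv_cancel_right]

theorem toWord_mul_mk_singleton_of_isReduced {x : FreeGroup X} {ℓ : X × Bool}
    (h : IsReduced (x.toWord ++ [ℓ])) : (x * mk [ℓ]).toWord = x.toWord ++ [ℓ] := by
  rw [← h.reduce_eq, ← toWord_mk, ← mul_mk, mk_toWord]

theorem toWord_mul_mk_singleton (x : FreeGroup X) (ℓ : X × Bool) :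
    (x * mk [ℓ]).toWord = x.toWord ++ [ℓ] ∨
      x.toWord = (x * mk [ℓ]).toWord ++ [(ℓ.1, !ℓ.2)] := by
  by_cases hm : x.toWord.getLast? = some (ℓ.1, !ℓ.2)
  · right
    obtain ⟨w, hw⟩ := List.getLast?_eq_some_iff.1 hm
    have hx : x * mk [ℓ] = mk w := by
      rw [← mk_toWord (x := x), hw, ← mul_mk, mul_assoc, ← mk_singleton_inv, inv_mul_cancel,
        mul_one]
    rw [hx, toWord_mk_of_prefix (hw ▸ List.prefix_append _ _), hw]
  · left
    refine toWord_mul_mk_singleton_of_isReduced (isReduced_append_singleton isReduced_toWord ?_)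
    intro m hm' h1
    by_contra h2
    obtain rfl : m = (ℓ.1, !ℓ.2) := Prod.ext h1 (Bool.eq_not_iff.2 h2)
    exact hm hm'

theorem exists_toWord_eq_append_of_ne_one {x : FreeGroup X} (hx : x ≠ 1) :
    ∃ (p : FreeGroup X) (ℓ : X × Bool),
      x.toWord = p.toWord ++ [ℓ] ∧ (x * mk [ℓ]).toWord = x.toWord ++ [ℓ] := by
  obtain h | ⟨w, ℓ, hw⟩ := List.eq_nil_or_concat' x.toWord
  · exact absurd (toWord_eq_nil_iff.1 h) hx
  refine ⟨mk w, ℓ, by rw [toWord_mk_of_prefix (hw ▸ List.prefix_append _ _), hw], ?_⟩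
  refine toWord_mul_mk_singleton_of_isReduced (isReduced_append_singleton isReduced_toWord ?_)
  simp [hw]

theorem exists_toWord_eq_append_of_prefix {x h : FreeGroup X} (hxh : x.toWord <+: h.toWord)
    (hne : x ≠ h) :
    ∃ (y : FreeGroup X) (ℓ : X × Bool), y.toWord = x.toWord ++ [ℓ] ∧ y.toWord <+: h.toWord := by
  have hlt : x.toWord.length < h.toWord.length :=
    lt_of_le_of_ne hxh.length_le fun hl => hne (toWord_injective (hxh.eq_of_length hl))
  have htake :
      h.toWord.take (x.toWord.length + 1) = x.toWord ++ [h.toWord[x.toWord.length]] := by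
    rw [← List.take_concat_get' _ _ hlt, ← List.prefix_iff_eq_take.1 hxh]
  refine ⟨mk (h.toWord.take (x.toWord.length + 1)), h.toWord[x.toWord.length], ?_, ?_⟩ <;>
    rw [toWord_mk_of_prefix (List.take_prefix _ _)]
  · exact htake
  · exact List.take_prefix _ _

theorem geodEdges_finite (u v : FreeGroup X) : (geodEdges u v).Finite :=
  ((Set.finite_lt_nat _).image _).subset fun _ ⟨i, hi, he⟩ => ⟨i, hi, he.symm⟩

theorem mem_geodEdges_one_iff {h : FreeGroup X} {e : Sym2 (FreeGroup X)} :
    e ∈ geodEdges 1 h ↔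
      ∃ (u v : FreeGroup X) (ℓ : X × Bool),
        v.toWord = u.toWord ++ [ℓ] ∧ v.toWord <+: h.toWord ∧ e = s(u, v) := by
  simp only [geodEdges, inv_one, one_mul, Set.mem_ofPred_eq]
  constructor
  · rintro ⟨i, hi, rfl⟩
    refine ⟨_, _, h.toWord[i], ?_, ?_, rfl⟩ <;>
      rw [toWord_mk_of_prefix (List.take_prefix _ _)]
    · rw [toWord_mk_of_prefix (List.take_prefix _ _), List.take_concat_get']
    · exact List.take_prefix _ _
  · rintro ⟨u, v, ℓ, huv, hv, rfl⟩
    have hu : u.toWord <+: h.toWord := (huv ▸ List.prefix_append _ _).trans hv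
    have hlen : v.toWord.length = u.toWord.length + 1 := by simp [huv]
    refine ⟨u.toWord.length, by have := hv.length_le; omega, ?_⟩
    rw [← List.prefix_iff_eq_take.1 hu, ← hlen, ← List.prefix_iff_eq_take.1 hv, mk_toWord,
      mk_toWord]

theorem mk_mem_geodEdges_one_iff {x y h : FreeGroup X} {ℓ : X × Bool}
    (hxy : y.toWord = x.toWord ++ [ℓ]) : s(x, y) ∈ geodEdges 1 h ↔ y.toWord <+: h.toWord := by
  refine ⟨fun he => ?_, fun hy => mem_geodEdges_one_iff.2 ⟨x, y, ℓ, hxy, hy, rfl⟩⟩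
  obtain ⟨u, v, m, huv, hv, he⟩ := mem_geodEdges_one_iff.1 he
  rcases Sym2.eq_iff.1 he with ⟨rfl, rfl⟩ | ⟨rfl, rfl⟩
  · exact hv
  · have h1 := congrArg List.length hxy
    have h2 := congrArg List.length huv
    simp only [List.length_append, List.length_singleton] at h1 h2
    omega

theorem mk_notMem_geodEdges_one {x y : FreeGroup X} {ℓ : X × Bool}
    (hxy : y.toWord = x.toWord ++ [ℓ]) : s(x, y) ∉ geodEdges 1 x := by
  rw [mk_mem_geodEdges_one_iff hxy]
  intro hp
  simpa [hxy] using hp.length_le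

theorem geodEdges_one_of_toWord_eq_append {x y : FreeGroup X} {ℓ : X × Bool}
    (hxy : y.toWord = x.toWord ++ [ℓ]) : geodEdges 1 y = insert s(x, y) (geodEdges 1 x) := by
  ext e
  simp only [Set.mem_insert_iff, mem_geodEdges_one_iff, hxy, List.prefix_concat_iff]
  constructor
  · rintro ⟨u, v, m, huv, hv | hv, rfl⟩
    · obtain ⟨hu, -⟩ := List.append_inj' (huv.symm.trans hv) rfl
      rw [← toWord_injective hu, ← toWord_injective (hv.trans hxy.symm)]
      exact Or.inl rfl
    · exact Or.inr ⟨u, v, m, huv, hv, rfl⟩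
  · rintro (rfl | ⟨u, v, m, huv, hv, rfl⟩)
    · exact ⟨x, y, ℓ, hxy, Or.inl hxy, rfl⟩
    · exact ⟨u, v, m, huv, Or.inr hv, rfl⟩

theorem geodUnion_finite (u : FreeGroup X) {H : Set (FreeGroup X)} (hH : H.Finite) :
    (geodUnion u H).Finite :=
  hH.biUnion fun h _ => geodEdges_finite u h

theorem geodUnion_sdiff_geodEdges_congr {u x : FreeGroup X} {H H' : Set (FreeGroup X)}
    (h : ∀ y ≠ x, y ∈ H ↔ y ∈ H') :
    geodUnion u H \ geodEdges u x = geodUnion u H' \ geodEdges u x := by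
  ext e
  simp only [geodUnion, Set.mem_sdiff, Set.mem_iUnion, exists_prop]
  refine and_congr_left fun he => exists_congr fun y => and_congr_left fun hy => h y ?_
  rintro rfl
  exact he hy

theorem mk_mem_geodUnion_one_iff {x y : FreeGroup X} {ℓ : X × Bool} {H : Set (FreeGroup X)}
    (hxy : y.toWord = x.toWord ++ [ℓ]) :
    s(x, y) ∈ geodUnion 1 H ↔ ∃ h ∈ H, y.toWord <+: h.toWord := by
  simp only [geodUnion, Set.mem_iUnion, exists_prop, mk_mem_geodEdges_one_iff hxy]

end FreeGroup

section Wreath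

variable {A B : Type*} [Group A]

noncomputable def lampLength (SA : Set A) (f : FinSuppSubgroup A B) : ℕ :=
  ∑ᶠ y, wordLength SA ((f : B → A) y)

theorem lampLength_add_of_eqOn_compl (SA : Set A) {f f' : FinSuppSubgroup A B} {x : B}
    (h : ∀ y ≠ x, (f' : B → A) y = (f : B → A) y) :
    lampLength SA f' + wordLength SA ((f : B → A) x) =
      lampLength SA f + wordLength SA ((f' : B → A) x) := by
  have hfin : ∀ f : FinSuppSubgroup A B,
      Function.HasFiniteSupport fun y => wordLength SA ((f : B → A) y) := fun f =>
    f.2.subset fun y hy h1 => hy (by simp [h1])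
  rw [lampLength, lampLength, ← add_finsum_cond_ne x (hfin f), ← add_finsum_cond_ne x (hfin f'),
    finsum_congr fun y => finsum_congr fun hy => congrArg (wordLength SA) (h y hy)]
  ring

variable [Group B]

open SemidirectProduct

theorem lampSingle_inv (a : A) : (lampSingle A B a)⁻¹ = lampSingle A B a⁻¹ := by
  ext y
  by_cases hy : y = 1 <;> simp [lampSingle, hy]

theorem inv_mem_stdGen {SA : Set A} {SB : Set B} (hSA : ∀ a ∈ SA, a⁻¹ ∈ SA)
    (hSB : ∀ b ∈ SB, b⁻¹ ∈ SB) {s : Wreath A B} (hs : s ∈ stdGen SA SB) :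
    s⁻¹ ∈ stdGen SA SB := by
  rcases hs with ⟨a, ha, rfl⟩ | ⟨b, hb, rfl⟩
  · exact Or.inl ⟨a⁻¹, hSA a ha, by simp [← lampSingle_inv]⟩
  · exact Or.inr ⟨b⁻¹, hSB b hb, map_inv _ _⟩

theorem mk_mul_inr (f : FinSuppSubgroup A B) (x t : B) :
    (⟨f, x⟩ : Wreath A B) * inr t = ⟨f, x * t⟩ := by
  ext <;> simp

theorem right_mul_inl_lampSingle (g : Wreath A B) (a : A) :
    (g * inl (lampSingle A B a)).right = g.right := by
  simp

theorem left_mul_inl_lampSingle_apply (g : Wreath A B) (a : A) (y : B) :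
    ((g * inl (lampSingle A B a)).left : B → A) y =
      (g.left : B → A) y * if y = g.right then a else 1 := by
  have h : ((lampAction A B g.right (lampSingle A B a) : FinSuppSubgroup A B) : B → A) y =
      if y = g.right then a else 1 := by
    show (if g.right⁻¹ * y = 1 then a else 1) = _
    simp only [inv_mul_eq_one, eq_comm]
  simp [h]

end Wreath

section TourLength

variable {X A : Type*} [DecidableEq X] [Group A]

open SemidirectProduct FreeGroup

/-- The shortest way to reach `(f, x)` from `1` walks through the subtree spanned by `1`,
`supp f` and `x`, crossing the edges of `[1, x]` once and all other edges twice, and adjusts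
each lamp on the way. -/
noncomputable def tourLength (SA : Set A) (g : Wreath A (FreeGroup X)) : ℕ :=
  lampLength SA g.left +
    2 * (geodUnion 1 (Function.mulSupport (g.left : FreeGroup X → A)) \
      geodEdges 1 g.right).ncard +
    g.right.norm

theorem tourLength_one (SA : Set A) : tourLength SA (1 : Wreath A (FreeGroup X)) = 0 := by
  simp [tourLength, lampLength, geodUnion]

theorem tourLength_mul_inl (SA : Set A) (g : Wreath A (FreeGroup X)) (a : A) :
    tourLength SA (g * inl (lampSingle A _ a)) +
        wordLength SA ((g.left : FreeGroup X → A) g.right) =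
      tourLength SA g + wordLength SA ((g.left : FreeGroup X → A) g.right * a) := by
  have hoff : ∀ y ≠ g.right, ((g * inl (lampSingle A _ a)).left : FreeGroup X → A) y =
      (g.left : FreeGroup X → A) y := fun y hy => by
    rw [left_mul_inl_lampSingle_apply, if_neg hy, mul_one]
  have hlamp := lampLength_add_of_eqOn_compl SA hoff
  have htree : geodUnion 1 (Function.mulSupport ((g * inl (lampSingle A _ a)).left :
      FreeGroup X → A)) \ geodEdges 1 g.right =
      geodUnion 1 (Function.mulSupport (g.left : FreeGroup X → A)) \ geodEdges 1 g.right :=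
    geodUnion_sdiff_geodEdges_congr fun y hy => by
      rw [Function.mem_mulSupport, Function.mem_mulSupport, hoff y hy]
  rw [left_mul_inl_lampSingle_apply, if_pos rfl] at hlamp
  simp only [tourLength, right_mul_inl_lampSingle, htree]
  omega

variable {SA : Set A}

theorem tourLength_of_mem_of_toWord_eq_append {f : FinSuppSubgroup A (FreeGroup X)}
    {x y : FreeGroup X} {ℓ : X × Bool} (hxy : y.toWord = x.toWord ++ [ℓ])
    (he : s(x, y) ∈ geodUnion 1 (Function.mulSupport (f : FreeGroup X → A))) :
    tourLength SA ⟨f, y⟩ + 1 = tourLength SA ⟨f, x⟩ := by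
  have hcard := Set.ncard_sdiff_singleton_add_one
    (s := geodUnion 1 (Function.mulSupport (f : FreeGroup X → A)) \ geodEdges 1 x)
    ⟨he, mk_notMem_geodEdges_one hxy⟩ (geodUnion_finite 1 f.2).sdiff
  have hnorm : y.norm = x.norm + 1 := by simp [FreeGroup.norm, hxy]
  simp only [tourLength, geodEdges_one_of_toWord_eq_append hxy, Set.insert_eq, Set.union_comm,
    ← Set.sdiff_sdiff] at hcard ⊢
  omega

theorem tourLength_of_notMem_of_toWord_eq_append {f : FinSuppSubgroup A (FreeGroup X)}
    {x y : FreeGroup X} {ℓ : X × Bool} (hxy : y.toWord = x.toWord ++ [ℓ])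
    (he : s(x, y) ∉ geodUnion 1 (Function.mulSupport (f : FreeGroup X → A))) :
    tourLength SA ⟨f, y⟩ = tourLength SA ⟨f, x⟩ + 1 := by
  have hnorm : y.norm = x.norm + 1 := by simp [FreeGroup.norm, hxy]
  simp only [tourLength, geodEdges_one_of_toWord_eq_append hxy, Set.sdiff_insert_of_notMem he]
  omega

theorem tourLength_le_succ_of_toWord_eq_append (f : FinSuppSubgroup A (FreeGroup X))
    {x y : FreeGroup X} {ℓ : X × Bool} (hxy : y.toWord = x.toWord ++ [ℓ]) :
    tourLength SA ⟨f, y⟩ ≤ tourLength SA ⟨f, x⟩ + 1 ∧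
      tourLength SA ⟨f, x⟩ ≤ tourLength SA ⟨f, y⟩ + 1 := by
  by_cases he : s(x, y) ∈ geodUnion 1 (Function.mulSupport (f : FreeGroup X → A))
  · have := tourLength_of_mem_of_toWord_eq_append (SA := SA) hxy he
    omega
  · have := tourLength_of_notMem_of_toWord_eq_append (SA := SA) hxy he
    omega

theorem tourLength_mk_mul_le (f : FinSuppSubgroup A (FreeGroup X)) (x : FreeGroup X)
    {t : FreeGroup X} (ht : t ∈ freeGenSet X) :
    tourLength SA ⟨f, x * t⟩ ≤ tourLength SA ⟨f, x⟩ + 1 := by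
  obtain ⟨ℓ, rfl⟩ := exists_eq_mk_singleton_of_mem_freeGenSet ht
  rcases toWord_mul_mk_singleton x ℓ with h | h
  exacts [(tourLength_le_succ_of_toWord_eq_append f h).1,
    (tourLength_le_succ_of_toWord_eq_append f h).2]

theorem tourLength_mul_le (hS : ∀ a ∈ SA, a⁻¹ ∈ SA) (hgen : Subgroup.closure SA = ⊤)
    (g : Wreath A (FreeGroup X)) {s : Wreath A (FreeGroup X)}
    (hs : s ∈ stdGen SA (freeGenSet X)) :
    tourLength SA (g * s) ≤ tourLength SA g + 1 := by
  rcases hs with ⟨a, ha, rfl⟩ | ⟨t, ht, rfl⟩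
  · dsimp only
    have := tourLength_mul_inl SA g a
    have := wordLength_mul_le_succ hS hgen ((g.left : FreeGroup X → A) g.right) ha
    omega
  · exact mk_mul_inr g.left g.right t ▸ tourLength_mk_mul_le g.left g.right ht

theorem exists_tourLength_mul_lt (hS : ∀ a ∈ SA, a⁻¹ ∈ SA) (hgen : Subgroup.closure SA = ⊤)
    {g : Wreath A (FreeGroup X)} (hg : g ≠ 1) :
    ∃ s ∈ stdGen SA (freeGenSet X), tourLength SA (g * s) < tourLength SA g := by
  obtain ⟨f, x⟩ := g
  by_cases hfx : (f : FreeGroup X → A) x = 1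
  swap
  · obtain ⟨a, ha, hlt⟩ := exists_wordLength_mul_lt hS hgen hfx
    have := tourLength_mul_inl SA ⟨f, x⟩ a
    dsimp only at this
    exact ⟨inl (lampSingle A _ a), Or.inl ⟨a, ha, rfl⟩, by omega⟩
  by_cases hpre : ∃ h ∈ Function.mulSupport (f : FreeGroup X → A), x.toWord <+: h.toWord
  · obtain ⟨h, hh, hxh⟩ := hpre
    obtain ⟨y, ℓ, hxy, hyh⟩ :=
      exists_toWord_eq_append_of_prefix hxh fun hxh' => hh (hxh' ▸ hfx)
    have := tourLength_of_mem_of_toWord_eq_append (SA := SA) hxy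
      ((mk_mem_geodUnion_one_iff hxy).2 ⟨h, hh, hyh⟩)
    refine ⟨_, Or.inr ⟨_, mk_singleton_mem_freeGenSet ℓ, rfl⟩, ?_⟩
    rw [mk_mul_inr, ← eq_mul_mk_singleton hxy]
    omega
  · have hx : x ≠ 1 := by
      rintro rfl
      refine hg (SemidirectProduct.ext (Subtype.ext (funext fun y => ?_)) rfl)
      by_contra hy
      exact hpre ⟨y, hy, by simp⟩
    obtain ⟨p, ℓ, hpx, -⟩ := exists_toWord_eq_append_of_ne_one hx
    have := tourLength_of_notMem_of_toWord_eq_append (SA := SA) hpx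
      fun he => hpre ((mk_mem_geodUnion_one_iff hpx).1 he)
    refine ⟨_, Or.inr ⟨_, inv_mem_freeGenSet (mk_singleton_mem_freeGenSet ℓ), rfl⟩, ?_⟩
    rw [mk_mul_inr, mul_mk_singleton_inv_eq hpx]
    omega

theorem wordLength_eq_tourLength (hS : ∀ a ∈ SA, a⁻¹ ∈ SA) (hgen : Subgroup.closure SA = ⊤)
    (g : Wreath A (FreeGroup X)) : wordLength (stdGen SA (freeGenSet X)) g = tourLength SA g :=
  wordLength_eq_of_descent (fun _ => inv_mem_stdGen hS fun _ => inv_mem_freeGenSet) _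
    (tourLength_one SA) (fun g _ => tourLength_mul_le hS hgen g)
    (fun _ => exists_tourLength_mul_lt hS hgen) g

theorem tourLength_mul_inl_le_iff (g : Wreath A (FreeGroup X)) (a : A) :
    tourLength SA (g * inl (lampSingle A _ a)) ≤ tourLength SA g ↔
      wordLength SA ((g.left : FreeGroup X → A) g.right * a) ≤
        wordLength SA ((g.left : FreeGroup X → A) g.right) := by
  have := tourLength_mul_inl SA g a
  omega

theorem eq_one_of_forall_tourLength_mk_mul_le {f : FinSuppSubgroup A (FreeGroup X)}
    {x : FreeGroup X}
    (h : ∀ t ∈ freeGenSet X, tourLength SA ⟨f, x * t⟩ ≤ tourLength SA ⟨f, x⟩) : x = 1 := by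
  by_contra hx
  obtain ⟨p, ℓ, hpx, hxc⟩ := exists_toWord_eq_append_of_ne_one hx
  have hc := h _ (mk_singleton_mem_freeGenSet ℓ)
  have hp := h _ (inv_mem_freeGenSet (mk_singleton_mem_freeGenSet ℓ))
  rw [mul_mk_singleton_inv_eq hpx] at hp
  by_cases he : s(x, x * mk [ℓ]) ∈ geodUnion 1 (Function.mulSupport (f : FreeGroup X → A))
  · obtain ⟨h, hh, hch⟩ := (mk_mem_geodUnion_one_iff hxc).1 he
    have := tourLength_of_mem_of_toWord_eq_append (SA := SA) hpx
      ((mk_mem_geodUnion_one_iff hpx).2 ⟨h, hh, (hxc ▸ List.prefix_append _ _).trans hch⟩)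
    omega
  · have := tourLength_of_notMem_of_toWord_eq_append (SA := SA) hxc he
    omega

theorem forall_tourLength_mk_mul_le_iff {f : FinSuppSubgroup A (FreeGroup X)}
    {x : FreeGroup X} :
    (∀ t ∈ freeGenSet X, tourLength SA ⟨f, x * t⟩ ≤ tourLength SA ⟨f, x⟩) ↔
      (∀ t ∈ freeGenSet X,
        s(x, x * t) ∈ geodUnion 1 (Function.mulSupport (f : FreeGroup X → A))) ∧ x = 1 := by
  have hone : ∀ ℓ : X × Bool,
      ((1 : FreeGroup X) * mk [ℓ]).toWord = (1 : FreeGroup X).toWord ++ [ℓ] := fun ℓ => by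
    simp [toWord_mk]
  refine ⟨fun h => ?_, ?_⟩
  · obtain rfl := eq_one_of_forall_tourLength_mk_mul_le h
    refine ⟨fun t ht => ?_, rfl⟩
    obtain ⟨ℓ, rfl⟩ := exists_eq_mk_singleton_of_mem_freeGenSet ht
    by_contra he
    have := tourLength_of_notMem_of_toWord_eq_append (SA := SA) (hone ℓ) he
    have := h _ ht
    omega
  · rintro ⟨h, rfl⟩ t ht
    obtain ⟨ℓ, rfl⟩ := exists_eq_mk_singleton_of_mem_freeGenSet ht
    have := tourLength_of_mem_of_toWord_eq_append (SA := SA) (hone ℓ) (h _ ht)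
    omega

end TourLength

theorem wreath_freeGroup_deadEnd_iff_general {X A : Type*} [DecidableEq X]
    [Group A] (SA : Set A) (hSA : IsSymmGen SA)
    (f : FinSuppSubgroup A (FreeGroup X)) (x : FreeGroup X) :
    (∀ s ∈ stdGen SA (freeGenSet X),
        wordLength (stdGen SA (freeGenSet X)) ((⟨f, x⟩ : Wreath A (FreeGroup X)) * s) ≤
          wordLength (stdGen SA (freeGenSet X)) (⟨f, x⟩ : Wreath A (FreeGroup X))) ↔
      ((∀ a ∈ SA, wordLength SA ((f : FreeGroup X → A) x * a) ≤
          wordLength SA ((f : FreeGroup X → A) x)) ∧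
        (∀ s ∈ freeGenSet X,
          s(x, x * s) ∈ geodUnion 1 (Function.mulSupport (f : FreeGroup X → A))) ∧
        x = 1) := by
  simp only [wordLength_eq_tourLength hSA.symm hSA.closure_eq_top]
  simp only [stdGen, Set.mem_union, or_imp, forall_and, Set.forall_mem_image, mk_mul_inr]
  exact and_congr (forall₂_congr fun a _ => tourLength_mul_inl_le_iff ⟨f, x⟩ a)
    forall_tourLength_mk_mul_le_iff

/-- Characterization of dead ends in `A ≀ F(X)` with standard generators: `g = (f, x)`
is a dead end iff `f(x)` is a dead end of `(A, S_A)`, every edge `{x, xs}` (`s ∈ S`)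
lies in `[1, supp f]`, and `x = 1`. -/
theorem wreath_freeGroup_deadEnd_iff {X A : Type*} [DecidableEq X] [Fintype X] [Nonempty X]
    [Group A] (SA : Set A) (hSA : IsSymmGen SA)
    (f : FinSuppSubgroup A (FreeGroup X)) (x : FreeGroup X) :
    (∀ s ∈ stdGen SA (freeGenSet X),
        wordLength (stdGen SA (freeGenSet X)) ((⟨f, x⟩ : Wreath A (FreeGroup X)) * s) ≤
          wordLength (stdGen SA (freeGenSet X)) (⟨f, x⟩ : Wreath A (FreeGroup X))) ↔
      ((∀ a ∈ SA, wordLength SA ((f : FreeGroup X → A) x * a) ≤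
          wordLength SA ((f : FreeGroup X → A) x)) ∧
        (∀ s ∈ freeGenSet X,
          s(x, x * s) ∈ geodUnion 1 (Function.mulSupport (f : FreeGroup X → A))) ∧
        x = 1) :=
  wreath_freeGroup_deadEnd_iff_general SA hSA f x
end

section
/- Let G be a finite nontrivial group with a finite symmetric generating set S_G. If the Cayley graph Cay(G,S_G) is Hamiltonian-connected, or if it is bipartite and Hamiltonian-laceable, then ℋ(G,S_G) ≤ 0. -/
/-!
A closed walk through all `n ≥ 2` vertices of a graph has at least `n` edges, so
`TS(1, 1; G) ≥ |G|` as soon as `Cay(G, S)` has a Hamiltonian path starting at `1`. On the other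
hand, for `g ≠ 1` either a Hamiltonian path from `1` ends at `g` or at a neighbour of `g`, giving
`TS(1, g; G) ≤ |G|`, or `g` is isolated and `TS(1, g; G) = 0`. In the laceable case, when `g`
has the colour of `1`, any neighbour of `g` has the other colour and so is the end of such a path.
-/

open scoped Classical

/-- The Cayley graph of `G` with respect to `S`: an edge between `g` and `g * s` for
each `s ∈ S`. -/
def cayley {G : Type*} [Group G] (S : Set G) : SimpleGraph G :=
  SimpleGraph.fromRel (fun x y => ∃ s ∈ S, y = x * s)

/-- `TS S b b' F`: the minimal number of edges of a walk in the Cayley graph `Cay(G, S)`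
from `b` to `b'` that visits every element of `F` (`0` if no such walk exists). -/
noncomputable def TS {G : Type*} [Group G] (S : Set G) (b b' : G) (F : Set G) : ℕ :=
  sInf {n | ∃ w : (cayley S).Walk b b', (∀ x ∈ F, x ∈ w.support) ∧ w.length = n}

/-- The Hamiltonian difference of a finite group `G` with generating set `S`:
the maximum over `g ≠ 1` of `TS(1, g; G)`, minus `TS(1, 1; G)`. -/
noncomputable def HamDiff (G : Type*) [Group G] (S : Set G) : ℤ :=
  ((sSup {n : ℕ | ∃ g : G, g ≠ 1 ∧ n = TS S 1 g Set.univ} : ℕ) : ℤ) -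
    ((TS S 1 1 Set.univ : ℕ) : ℤ)

/-- A graph is Hamiltonian-connected if any two distinct vertices are joined by a
Hamiltonian path. -/
def HamConnected {V : Type*} (G : SimpleGraph V) : Prop :=
  ∀ u v : V, u ≠ v → ∃ p : G.Walk u v, p.IsHamiltonian

/-- A graph is bipartite and Hamiltonian-laceable: it admits a proper `2`-coloring such
that any two vertices of different colors are joined by a Hamiltonian path. -/
def BipartiteHamLaceable {V : Type*} (G : SimpleGraph V) : Prop :=
  ∃ C : G.Coloring Bool, ∀ u v : V, C u ≠ C v → ∃ p : G.Walk u v, p.IsHamiltonian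

namespace SimpleGraph.Walk

variable {V : Type*} {G : SimpleGraph V}

theorem card_le_length_of_forall_mem_support [Fintype V] [Nontrivial V] {u : V}
    (w : G.Walk u u) (hw : ∀ x, x ∈ w.support) : Fintype.card V ≤ w.length := by
  obtain ⟨y, hy⟩ := exists_ne u
  have hnil : ¬ w.Nil := fun h => hy (by simpa [w.nil_iff_support_eq.1 h] using hw y)
  have htail : ∀ x, x ∈ w.support.tail := by
    intro x
    by_cases hx : x = u
    · exact hx ▸ end_mem_tail_support hnil
    · simpa [hx] using w.mem_support_iff.1 (hw x)
  calc Fintype.card V = (Finset.univ : Finset V).card := Finset.card_univ.symm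
    _ ≤ w.support.tail.toFinset.card :=
      Finset.card_le_card fun x _ => List.mem_toFinset.2 (htail x)
    _ ≤ w.support.tail.length := List.toFinset_card_le _
    _ = w.length := by rw [List.length_tail, length_support, Nat.add_sub_cancel]

end SimpleGraph.Walk

section TS

variable {G : Type*} [Group G] {S : Set G}

theorem TS_le_length {b b' : G} {F : Set G} (w : (cayley S).Walk b b')
    (hw : ∀ x ∈ F, x ∈ w.support) : TS S b b' F ≤ w.length :=
  Nat.sInf_le ⟨w, hw, rfl⟩

theorem TS_eq_zero_of_forall_not_adj {b g : G} {F : Set G} (hbg : b ≠ g)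
    (hg : ∀ v, ¬ (cayley S).Adj v g) : TS S b g F = 0 :=
  Nat.sInf_eq_zero.2 <| Or.inr <| Set.eq_empty_of_forall_notMem fun _ ⟨w, _⟩ =>
    hg _ (w.adj_penultimate (w.not_nil_of_ne hbg))

variable [Fintype G]

theorem card_le_TS_self_of_isHamiltonian [Nontrivial G] {b v : G} (p : (cayley S).Walk b v)
    (hp : p.IsHamiltonian) : Fintype.card G ≤ TS S b b Set.univ := by
  refine le_csInf ⟨_, p.append p.reverse, fun x _ => ?_, rfl⟩ ?_
  · exact (p.mem_support_append_iff _).2 (Or.inl (hp.mem_support x))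
  · rintro n ⟨w, hw, rfl⟩
    exact w.card_le_length_of_forall_mem_support fun x => hw x (Set.mem_univ x)

theorem TS_univ_le_card_of_isHamiltonian {b v g : G} (p : (cayley S).Walk b v)
    (hp : p.IsHamiltonian) (hvg : v = g ∨ (cayley S).Adj v g) :
    TS S b g Set.univ ≤ Fintype.card G := by
  have hcard := hp.length_eq
  have hpos : 0 < Fintype.card G := Fintype.card_pos_iff.2 ⟨b⟩
  rcases hvg with rfl | hadj
  · calc TS S b v Set.univ ≤ p.length := TS_le_length p fun x _ => hp.mem_support x
      _ ≤ Fintype.card G := by omega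
  · calc TS S b g Set.univ ≤ (p.concat hadj).length := TS_le_length _ fun x _ => by
          simpa [p.support_concat hadj] using Or.inl (hp.mem_support x)
      _ ≤ Fintype.card G := by rw [p.length_concat]; omega

theorem TS_univ_le_TS_self_of_isHamiltonian [Nontrivial G] {b v g : G}
    (p : (cayley S).Walk b v) (hp : p.IsHamiltonian) (hvg : v = g ∨ (cayley S).Adj v g) :
    TS S b g Set.univ ≤ TS S b b Set.univ :=
  (TS_univ_le_card_of_isHamiltonian p hp hvg).trans (card_le_TS_self_of_isHamiltonian p hp)

end TS

theorem hamDiff_nonpos_of_forall_TS_le {G : Type*} [Group G] {S : Set G}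
    (h : ∀ g : G, g ≠ 1 → TS S 1 g Set.univ ≤ TS S 1 1 Set.univ) : HamDiff G S ≤ 0 := by
  rw [HamDiff, sub_nonpos, Int.ofNat_le]
  exact csSup_le' fun n ⟨g, hg, hn⟩ => hn ▸ h g hg

theorem hamDiff_nonpos_of_hamConnected_or_laceable_general {G : Type*} [Group G] [Fintype G]
    [Nontrivial G] (S : Set G)
    (h : HamConnected (cayley S) ∨ BipartiteHamLaceable (cayley S)) :
    HamDiff G S ≤ 0 := by
  refine hamDiff_nonpos_of_forall_TS_le fun g hg => ?_
  rcases h with hc | ⟨C, hC⟩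
  · obtain ⟨p, hp⟩ := hc 1 g hg.symm
    exact TS_univ_le_TS_self_of_isHamiltonian p hp (Or.inl rfl)
  by_cases hcol : C 1 = C g
  · by_cases hiso : ∃ v, (cayley S).Adj v g
    · obtain ⟨v, hvg⟩ := hiso
      obtain ⟨p, hp⟩ := hC 1 v (hcol ▸ (C.valid hvg).symm)
      exact TS_univ_le_TS_self_of_isHamiltonian p hp (Or.inr hvg)
    · simp [TS_eq_zero_of_forall_not_adj hg.symm (not_exists.1 hiso)]
  · obtain ⟨p, hp⟩ := hC 1 g hcol
    exact TS_univ_le_TS_self_of_isHamiltonian p hp (Or.inl rfl)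

/-- If the Cayley graph of a finite nontrivial group `(G, S)` is Hamiltonian-connected,
or bipartite and Hamiltonian-laceable, then `ℋ(G, S) ≤ 0`. -/
theorem hamDiff_nonpos_of_hamConnected_or_laceable {G : Type*} [Group G] [Fintype G]
    [Nontrivial G] (S : Set G) (hS : IsSymmGen S)
    (h : HamConnected (cayley S) ∨ BipartiteHamLaceable (cayley S)) :
    HamDiff G S ≤ 0 :=
  hamDiff_nonpos_of_hamConnected_or_laceable_general S h
end

section
/- Let n ≥ 2 and let G = ℤ/nℤ with the symmetric generating set S = {g, g⁻¹} for a generator g of G. Then the Hamiltonian difference satisfies ℋ(G,S) = ⌊n/2⌋ − 2; in particular TS(e,e;G) = n and the maximum over h ∈ G∖{e} of TS(e,h;G) equals n + ⌊n/2⌋ − 2. -/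
open scoped Classical

/-! Lift a walk in the Cayley graph of `{g, g⁻¹}` to a path `p : ℕ → ℤ` with steps of size at
most `1` and `w.getVert i = g ^ p i`. If the walk visits every element, `p` takes every residue
modulo `n = orderOf g`, so its range has diameter at least `n - 1`. Reaching both extremes and
ending at `e` costs at least `2 (n - 1) - |e|` steps, and ending at `e` costs at least `|e|`;
with `e ≡ k [ZMOD n]` this forces length `≥ n - 2 + min k (n - k)` for `0 < k < n`, and `≥ n`
for `k = 0`. Going out to `g ^ (k - 1)`, back to `1`, and round the other way to `g ^ k` (or the
mirror image of this walk) attains the bound, which is largest at `k = n / 2`. -/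

theorem natAbs_le_max_or_add_min_le_natAbs {n k : ℕ} {e : ℤ} (hkn : k < n)
    (he : e ≡ k [ZMOD n]) : e.natAbs ≤ max k (n - k) ∨ n + min k (n - k) ≤ e.natAbs := by
  obtain ⟨q, hq⟩ := he.symm.dvd
  rcases le_or_gt 1 q with h | h
  · have : (n : ℤ) ≤ n * q := le_mul_of_one_le_right (by positivity) h
    omega
  rcases le_or_gt (-1) q with h' | h'
  · obtain rfl | rfl : q = 0 ∨ q = -1 := by omega
    all_goals omega
  · have : (n : ℤ) * q ≤ n * -2 := mul_le_mul_of_nonneg_left (by omega) (by positivity)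
    omega

section IntPath

variable {p : ℕ → ℤ}

theorem natAbs_sub_le_of_natAbs_step_le_one (hp : ∀ i, (p (i + 1) - p i).natAbs ≤ 1)
    {i j : ℕ} (hij : i ≤ j) : (p j - p i).natAbs ≤ j - i := by
  induction j, hij using Nat.le_induction with
  | base => simp
  | succ j hij ih => have := hp j; omega

theorem two_mul_natAbs_sub_le (hp : ∀ i, (p (i + 1) - p i).natAbs ≤ 1) (hp0 : p 0 = 0)
    {i j L : ℕ} (hi : i ≤ L) (hj : j ≤ L) : 2 * (p i - p j).natAbs ≤ L + (p L).natAbs := by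
  wlog hij : i ≤ j generalizing i j
  · rw [← Int.natAbs_neg, neg_sub]; exact this hj hi (by omega)
  have h₁ := natAbs_sub_le_of_natAbs_step_le_one hp (Nat.zero_le i)
  have h₂ := natAbs_sub_le_of_natAbs_step_le_one hp hij
  have h₃ := natAbs_sub_le_of_natAbs_step_le_one hp hj
  omega

theorem exists_le_sub_of_forall_modEq {n L : ℕ}
    (hcov : ∀ r : ℤ, ∃ i ≤ L, p i ≡ r [ZMOD n]) :
    ∃ i ≤ L, ∃ j ≤ L, (n : ℤ) ≤ p i - p j + 1 := by
  obtain ⟨i, hi, hmax⟩ := (Finset.range (L + 1)).exists_max_image p ⟨0, by simp⟩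
  obtain ⟨j, hj, hmin⟩ := (Finset.range (L + 1)).exists_min_image p ⟨0, by simp⟩
  -- the residue of `p j - 1` is taken by no value in `[p j, p j + n - 2]`
  obtain ⟨l, hl, hlr⟩ := hcov (p j - 1)
  have hl' : l ∈ Finset.range (L + 1) := Finset.mem_range.2 (by omega)
  have hdvd : (n : ℤ) ∣ p l - p j + 1 := by convert hlr.symm.dvd using 1; ring
  have := Int.le_of_dvd (by linarith [hmin l hl']) hdvd
  exact ⟨i, by simpa [Nat.lt_succ_iff] using hi, j, by simpa [Nat.lt_succ_iff] using hj,
    by linarith [hmax l hl']⟩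

theorem le_of_forall_modEq_of_modEq_zero (hp : ∀ i, (p (i + 1) - p i).natAbs ≤ 1)
    (hp0 : p 0 = 0) {n L : ℕ} (hn : n ≠ 1) (hcov : ∀ r : ℤ, ∃ i ≤ L, p i ≡ r [ZMOD n])
    (hL : p L ≡ 0 [ZMOD n]) : n ≤ L := by
  obtain ⟨i, hi, j, hj, hij⟩ := exists_le_sub_of_forall_modEq hcov
  have hspread := two_mul_natAbs_sub_le hp hp0 hi hj
  have hend := natAbs_sub_le_of_natAbs_step_le_one hp (Nat.zero_le L)
  rcases eq_or_ne (p L) 0 with h0 | h0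
  · omega
  · have hdvd : n ∣ (p L).natAbs := Int.ofNat_dvd_left.mp (by simpa using hL.symm.dvd)
    have := Nat.le_of_dvd (by omega) hdvd
    omega

theorem le_of_forall_modEq_of_modEq (hp : ∀ i, (p (i + 1) - p i).natAbs ≤ 1)
    (hp0 : p 0 = 0) {n k L : ℕ} (hkn : k < n)
    (hcov : ∀ r : ℤ, ∃ i ≤ L, p i ≡ r [ZMOD n]) (hL : p L ≡ k [ZMOD n]) :
    n - 2 + min k (n - k) ≤ L := by
  obtain ⟨i, hi, j, hj, hij⟩ := exists_le_sub_of_forall_modEq hcov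
  have hspread := two_mul_natAbs_sub_le hp hp0 hi hj
  have hend := natAbs_sub_le_of_natAbs_step_le_one hp (Nat.zero_le L)
  have := natAbs_le_max_or_add_min_le_natAbs hkn hL
  omega

end IntPath

section OrderOf

variable {G : Type*} [Group G]

theorem inv_pow_orderOf_sub {s : G} {k : ℕ} (hk : k ≤ orderOf s) :
    s⁻¹ ^ (orderOf s - k) = s ^ k := by
  rw [inv_pow, inv_eq_iff_mul_eq_one, ← pow_add, Nat.sub_add_cancel hk, pow_orderOf_eq_one]

theorem exists_pow_eq_of_zpowers_eq_top [Finite G] {s : G} (h : Subgroup.zpowers s = ⊤)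
    (x : G) : ∃ j < orderOf s, s ^ j = x := by
  obtain ⟨m, rfl⟩ := mem_powers_iff_mem_zpowers.mpr (h ▸ Subgroup.mem_top x)
  exact ⟨m % orderOf s, Nat.mod_lt _ (orderOf_pos s), pow_mod_orderOf s m⟩

theorem one_lt_orderOf [Finite G] {g : G} (hg1 : g ≠ 1) : 1 < orderOf g :=
  lt_of_le_of_ne (orderOf_pos g) (by simpa [eq_comm] using hg1)

end OrderOf

section Cayley

variable {G : Type*} [Group G]

theorem cayley_adj_mul {S : Set G} {s : G} (hs : s ∈ S) (hs1 : s ≠ 1) (x : G) :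
    (cayley S).Adj x (x * s) :=
  SimpleGraph.fromRel_adj _ _ _ |>.mpr ⟨by simpa using hs1, Or.inl ⟨s, hs, rfl⟩⟩

theorem exists_zpow_of_cayley_adj {g x y : G} (h : (cayley {g, g⁻¹}).Adj x y) :
    ∃ ε : ℤ, ε.natAbs ≤ 1 ∧ y = x * g ^ ε := by
  obtain ⟨-, ⟨s, hs, rfl⟩ | ⟨s, hs, rfl⟩⟩ := (SimpleGraph.fromRel_adj _ _ _).mp h <;>
    obtain rfl | rfl := hs
  · exact ⟨1, by simp, by simp⟩
  · exact ⟨-1, by simp, by simp⟩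
  · exact ⟨-1, by simp, by simp⟩
  · exact ⟨1, by simp, by simp⟩

theorem exists_zpow_lift {g a b : G} (w : (cayley {g, g⁻¹}).Walk a b) :
    ∃ p : ℕ → ℤ, p 0 = 0 ∧ (∀ i, (p (i + 1) - p i).natAbs ≤ 1) ∧
      ∀ i, w.getVert i = a * g ^ p i := by
  induction w with
  | nil => exact ⟨0, rfl, by simp, by simp⟩
  | cons h w ih =>
    obtain ⟨ε, hε, rfl⟩ := exists_zpow_of_cayley_adj h
    obtain ⟨p, hp0, hp, hpw⟩ := ih
    refine ⟨fun | 0 => 0 | i + 1 => ε + p i, rfl, ?_, ?_⟩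
    · rintro (_ | i)
      · simpa [hp0] using hε
      · simpa using hp i
    · rintro (_ | i)
      · simp
      · simp [hpw, mul_assoc, zpow_add]

theorem exists_zpow_lift_of_forall_zpow_mem_support {g b : G} (w : (cayley {g, g⁻¹}).Walk 1 b)
    (hw : ∀ r : ℤ, g ^ r ∈ w.support) :
    ∃ p : ℕ → ℤ, p 0 = 0 ∧ (∀ i, (p (i + 1) - p i).natAbs ≤ 1) ∧
      (∀ r : ℤ, ∃ i ≤ w.length, p i ≡ r [ZMOD orderOf g]) ∧ b = g ^ p w.length := by
  obtain ⟨p, hp0, hp, hpw⟩ := exists_zpow_lift w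
  refine ⟨p, hp0, hp, fun r ↦ ?_, by simpa using hpw w.length⟩
  obtain ⟨i, hi, hil⟩ := SimpleGraph.Walk.mem_support_iff_exists_getVert.mp (hw r)
  exact ⟨i, hil, zpow_eq_zpow_iff_modEq.mp (by simpa [hpw] using hi)⟩

theorem orderOf_le_length_of_forall_zpow_mem_support {g : G} (hg : g ≠ 1)
    (w : (cayley {g, g⁻¹}).Walk 1 1) (hw : ∀ r : ℤ, g ^ r ∈ w.support) :
    orderOf g ≤ w.length := by
  obtain ⟨p, hp0, hp, hcov, hend⟩ := exists_zpow_lift_of_forall_zpow_mem_support w hw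
  refine le_of_forall_modEq_of_modEq_zero hp hp0 (by simpa using hg) hcov ?_
  simpa using (zpow_eq_zpow_iff_modEq (x := g) (n := 0)).mp (by simpa using hend.symm)

theorem le_length_of_forall_zpow_mem_support {g : G} {k : ℕ} (hkn : k < orderOf g)
    (w : (cayley {g, g⁻¹}).Walk 1 (g ^ k)) (hw : ∀ r : ℤ, g ^ r ∈ w.support) :
    orderOf g - 2 + min k (orderOf g - k) ≤ w.length := by
  obtain ⟨p, hp0, hp, hcov, hend⟩ := exists_zpow_lift_of_forall_zpow_mem_support w hw
  refine le_of_forall_modEq_of_modEq hp hp0 hkn hcov ?_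
  exact zpow_eq_zpow_iff_modEq.mp (by simpa using hend.symm)

section PowWalk

variable {S : Set G} {s : G} (hs : s ∈ S) (hs1 : s ≠ 1)

def powWalk : (a : G) → (t : ℕ) → (cayley S).Walk a (a * s ^ t)
  | a, 0 => SimpleGraph.Walk.nil.copy rfl (by simp)
  | a, t + 1 => (SimpleGraph.Walk.cons (cayley_adj_mul hs hs1 a) (powWalk (a * s) t)).copy rfl
      (by rw [mul_assoc, ← pow_succ'])

theorem length_powWalk (a : G) (t : ℕ) : (powWalk hs hs1 a t).length = t := by
  induction t generalizing a with
  | zero => simp [powWalk]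
  | succ t ih => simp [powWalk, ih]

theorem mul_pow_mem_support_powWalk (a : G) {j t : ℕ} (hj : j ≤ t) :
    a * s ^ j ∈ (powWalk hs hs1 a t).support := by
  induction t generalizing a j with
  | zero => simp [powWalk, Nat.le_zero.mp hj]
  | succ t ih =>
    rcases j with _ | j
    · simp [powWalk]
    · simpa [powWalk, pow_succ', mul_assoc] using Or.inr (ih (a * s) (Nat.le_of_succ_le_succ hj))

end PowWalk

theorem exists_covering_walk_one_one [Finite G] {S : Set G} {s : G} (hs : s ∈ S)
    (hs1 : s ≠ 1) (h : Subgroup.zpowers s = ⊤) :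
    ∃ w : (cayley S).Walk 1 1, (∀ x, x ∈ w.support) ∧ w.length = orderOf s := by
  refine ⟨(powWalk hs hs1 1 (orderOf s)).copy rfl (by simp [pow_orderOf_eq_one]), fun x ↦ ?_,
    by simp [length_powWalk]⟩
  obtain ⟨j, hj, rfl⟩ := exists_pow_eq_of_zpowers_eq_top h x
  simpa using mul_pow_mem_support_powWalk hs hs1 1 hj.le

theorem exists_covering_walk_one_pow [Finite G] {S : Set G} {s : G} (hs : s ∈ S) (hs' : s⁻¹ ∈ S)
    (hs1 : s ≠ 1) (h : Subgroup.zpowers s = ⊤) {k : ℕ} (hk : 0 < k) (hkn : k ≤ orderOf s) :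
    ∃ w : (cayley S).Walk 1 (s ^ k), (∀ x, x ∈ w.support) ∧ w.length = orderOf s + k - 2 := by
  let out := powWalk hs hs1 1 (k - 1)
  let back := (powWalk hs' (inv_ne_one.mpr hs1) 1 (orderOf s - k)).copy rfl
    (by rw [one_mul, inv_pow_orderOf_sub hkn])
  refine ⟨(out.append out.reverse).append back, fun x ↦ ?_, ?_⟩
  · obtain ⟨j, hj, rfl⟩ := exists_pow_eq_of_zpowers_eq_top h x
    simp only [SimpleGraph.Walk.mem_support_append_iff, SimpleGraph.Walk.support_reverse,
      List.mem_reverse, or_self, SimpleGraph.Walk.support_copy, back, out]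
    rcases Nat.lt_or_ge j k with hjk | hjk
    · simpa using Or.inl (mul_pow_mem_support_powWalk hs hs1 1 (j := j) (by omega))
    · have := mul_pow_mem_support_powWalk hs' (inv_ne_one.mpr hs1) 1
        (j := orderOf s - j) (t := orderOf s - k) (by omega)
      have hj' : 1 * s⁻¹ ^ (orderOf s - j) = s ^ j := by rw [one_mul, inv_pow_orderOf_sub hj.le]
      exact Or.inr (hj' ▸ this)
  · simp only [SimpleGraph.Walk.length_append, SimpleGraph.Walk.length_reverse,
      SimpleGraph.Walk.length_copy, length_powWalk, out, back]
    omega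

theorem TS_eq_of_walk {S : Set G} {b b' : G} {F : Set G} {m : ℕ} (w : (cayley S).Walk b b')
    (hw : ∀ x ∈ F, x ∈ w.support) (hwm : w.length = m)
    (hle : ∀ w' : (cayley S).Walk b b', (∀ x ∈ F, x ∈ w'.support) → m ≤ w'.length) :
    TS S b b' F = m :=
  le_antisymm (Nat.sInf_le ⟨w, hw, hwm⟩)
    (le_csInf ⟨m, w, hw, hwm⟩ fun _ ⟨w', hw', hw'm⟩ ↦ hw'm ▸ hle w' hw')

variable [Finite G] {g : G}

theorem TS_cayley_one_one (hg1 : g ≠ 1) (hg : Subgroup.zpowers g = ⊤) :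
    TS {g, g⁻¹} 1 1 Set.univ = orderOf g := by
  obtain ⟨w, hw, hwl⟩ := exists_covering_walk_one_one (S := {g, g⁻¹}) (by simp) hg1 hg
  exact TS_eq_of_walk w (fun x _ ↦ hw x) hwl fun w' hw' ↦
    orderOf_le_length_of_forall_zpow_mem_support hg1 w' fun r ↦ hw' _ trivial

theorem TS_cayley_one_pow (hg : Subgroup.zpowers g = ⊤) {k : ℕ} (hk : 0 < k)
    (hkn : k < orderOf g) :
    TS {g, g⁻¹} 1 (g ^ k) Set.univ = orderOf g - 2 + min k (orderOf g - k) := by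
  have hg1 : g ≠ 1 := by rintro rfl; rw [orderOf_one] at hkn; omega
  obtain ⟨w, hw, hwl⟩ : ∃ w : (cayley {g, g⁻¹}).Walk 1 (g ^ k), (∀ x, x ∈ w.support) ∧
      w.length = orderOf g - 2 + min k (orderOf g - k) := by
    rcases le_total k (orderOf g - k) with hle | hle
    · obtain ⟨w, hw, hwl⟩ := exists_covering_walk_one_pow (S := {g, g⁻¹}) (by simp) (by simp)
        hg1 hg hk hkn.le
      exact ⟨w, hw, by omega⟩
    · obtain ⟨w, hw, hwl⟩ := exists_covering_walk_one_pow (S := {g, g⁻¹}) (s := g⁻¹) (by simp)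
        (by simp) (inv_ne_one.mpr hg1) (by rwa [Subgroup.zpowers_inv]) (k := orderOf g - k)
        (by omega) (by rw [orderOf_inv]; omega)
      rw [orderOf_inv] at hwl
      exact ⟨w.copy rfl (inv_pow_orderOf_sub hkn.le), by simpa using hw,
        by rw [SimpleGraph.Walk.length_copy, hwl]; omega⟩
  exact TS_eq_of_walk w (fun x _ ↦ hw x) hwl fun w' hw' ↦
    le_length_of_forall_zpow_mem_support hkn w' fun r ↦ hw' _ trivial

theorem sSup_TS_cayley (hg1 : g ≠ 1) (hg : Subgroup.zpowers g = ⊤) :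
    sSup {m : ℕ | ∃ h : G, h ≠ 1 ∧ m = TS {g, g⁻¹} 1 h Set.univ} =
      orderOf g - 2 + orderOf g / 2 := by
  have hn := one_lt_orderOf hg1
  refine IsGreatest.csSup_eq ⟨⟨g ^ (orderOf g / 2), pow_ne_one_of_lt_orderOf (by omega) (by omega),
    ?_⟩, ?_⟩
  · rw [TS_cayley_one_pow hg (by omega) (by omega)]
    omega
  · rintro _ ⟨h, hh, rfl⟩
    obtain ⟨k, hkn, rfl⟩ := exists_pow_eq_of_zpowers_eq_top hg h
    have hk : 0 < k := Nat.pos_of_ne_zero (by rintro rfl; simp at hh)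
    rw [TS_cayley_one_pow hg hk hkn]
    omega

theorem hamDiff_cayley (hg1 : g ≠ 1) (hg : Subgroup.zpowers g = ⊤) :
    HamDiff G {g, g⁻¹} = ((orderOf g / 2 : ℕ) : ℤ) - 2 := by
  have := one_lt_orderOf hg1
  rw [HamDiff, sSup_TS_cayley hg1 hg, TS_cayley_one_one hg1 hg]
  omega

end Cayley

/-- For the cyclic group `ℤ/nℤ` (`n ≥ 2`) with generating set `{g, g⁻¹}` for a
generator `g`: `ℋ = ⌊n/2⌋ - 2`, `TS(e, e; G) = n`, and the maximum over `h ≠ e` of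
`TS(e, h; G)` is `n + ⌊n/2⌋ - 2`. -/
theorem hamDiff_cyclic (n : ℕ) (hn : 2 ≤ n) (g : Multiplicative (ZMod n))
    (hg : Subgroup.closure ({g} : Set (Multiplicative (ZMod n))) = ⊤) :
    HamDiff (Multiplicative (ZMod n)) {g, g⁻¹} = ((n / 2 : ℕ) : ℤ) - 2 ∧
    TS ({g, g⁻¹} : Set (Multiplicative (ZMod n))) 1 1 Set.univ = n ∧
    sSup {k : ℕ | ∃ h : Multiplicative (ZMod n), h ≠ 1 ∧
        k = TS ({g, g⁻¹} : Set (Multiplicative (ZMod n))) 1 h Set.univ} =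
      n + n / 2 - 2 := by
  have : NeZero n := ⟨by omega⟩
  have hgen : Subgroup.zpowers g = ⊤ := by rwa [Subgroup.zpowers_eq_closure]
  have hord : orderOf g = n := by
    rw [orderOf_eq_card_of_forall_mem_zpowers (by simp [hgen])]
    exact Nat.card_zmod n
  have hg1 : g ≠ 1 := by rintro rfl; rw [orderOf_one] at hord; omega
  refine ⟨by rw [hamDiff_cayley hg1 hgen, hord], by rw [TS_cayley_one_one hg1 hgen, hord], ?_⟩
  rw [sSup_TS_cayley hg1 hgen, hord]
  omega
end
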